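/- Let P be a bounded poset of finite length such that any two distinct elements covering a common element have a join. Then P is a lattice. -/

import Mathlib

/-!
Finite length makes `<` and `>` well-founded. Joins of `a, b ≥ p` are built by downward induction
on `p`: pick covers `p ⋖ a' ≤ a` and `p ⋖ b' ≤ b`; if `a' ≠ b'` they have a join `j₀` by hypothesis,
and `a ⊔ b = (a ⊔ j₀) ⊔ b`, where both joins exist by induction since `a'` and `b'` lie above `p`.
Taking `p = ⊥` gives all joins. A meet is then a maximal lower bound `m`: for any lower bound `x`,
`x ⊔ m` is again a lower bound, so it equals `m`.
-/

section

variable {P : Type*}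

section ChainLength

variable [Preorder P] {N : ℕ}

theorem not_strictMono_of_chain_length_le
    (hN : ∀ l : List P, l.IsChain (· < ·) → l.length ≤ N) (f : ℕ → P) : ¬StrictMono f := by
  intro hf
  have hchain : ((List.range (N + 1)).map f).IsChain (· < ·) := by
    rw [List.isChain_map, List.isChain_range_succ]
    exact fun n _ => hf n.lt_succ_self
  simpa using hN _ hchain

theorem not_strictAnti_of_chain_length_le
    (hN : ∀ l : List P, l.IsChain (· < ·) → l.length ≤ N) (f : ℕ → P) : ¬StrictAnti f := by
  intro hf
  have hchain : ((List.range (N + 1)).map f).reverse.IsChain (· < ·) := by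
    rw [List.isChain_reverse, List.isChain_map, List.isChain_range_succ]
    exact fun n _ => hf n.lt_succ_self
  simpa using hN _ hchain

theorem wellFoundedLT_of_chain_length_le
    (hN : ∀ l : List P, l.IsChain (· < ·) → l.length ≤ N) : WellFoundedLT P :=
  ⟨RelEmbedding.wellFounded_iff_isEmpty.2
    ⟨fun f => not_strictAnti_of_chain_length_le hN f (strictAnti_nat_of_succ_lt fun n =>
      f.map_rel_iff.2 n.lt_succ_self)⟩⟩

theorem wellFoundedGT_of_chain_length_le
    (hN : ∀ l : List P, l.IsChain (· < ·) → l.length ≤ N) : WellFoundedGT P :=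
  ⟨RelEmbedding.wellFounded_iff_isEmpty.2
    ⟨fun f => not_strictMono_of_chain_length_le hN f (strictMono_nat_of_lt_succ fun n =>
      f.map_rel_iff.2 n.lt_succ_self)⟩⟩

end ChainLength

theorem isLUB_pair_iff [Preorder P] {a b j : P} :
    IsLUB {a, b} j ↔ ∀ u, j ≤ u ↔ a ≤ u ∧ b ≤ u := by
  simp [isLUB_iff_le_iff, upperBounds_insert]

theorem isLUB_pair_of_le [Preorder P] {a b : P} (h : a ≤ b) : IsLUB {a, b} b :=
  isLUB_pair_iff.2 fun _ => ⟨fun hbu => ⟨h.trans hbu, hbu⟩, And.right⟩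

theorem isLUB_pair_of_isLUB_of_le [Preorder P] {a b a' b' j₀ j₁ j : P} (ha : a' ≤ a)
    (hb : b' ≤ b) (h₀ : IsLUB {a', b'} j₀) (h₁ : IsLUB {a, j₀} j₁) (h : IsLUB {j₁, b} j) :
    IsLUB {a, b} j := by
  rw [isLUB_pair_iff] at *
  intro u
  rw [h, h₁, h₀]
  exact ⟨fun ⟨⟨hau, _⟩, hbu⟩ => ⟨hau, hbu⟩,
    fun ⟨hau, hbu⟩ => ⟨⟨hau, ha.trans hau, hb.trans hbu⟩, hbu⟩⟩

theorem exists_isLUB_pair_of_le [PartialOrder P] [WellFoundedLT P] [WellFoundedGT P]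
    (hcov : ∀ p a b : P, p ⋖ a → p ⋖ b → a ≠ b → ∃ j, IsLUB {a, b} j) {p a b : P}
    (hpa : p ≤ a) (hpb : p ≤ b) : ∃ j, IsLUB {a, b} j := by
  induction p using WellFoundedGT.induction generalizing a b with
  | ind p ih =>
  rcases hpa.eq_or_lt with rfl | hpa
  · exact ⟨b, isLUB_pair_of_le hpb⟩
  rcases hpb.eq_or_lt with rfl | hpb
  · exact ⟨a, by rw [Set.pair_comm]; exact isLUB_pair_of_le hpa.le⟩
  obtain ⟨a', hpa', ha'a⟩ := exists_covBy_le_of_lt hpa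
  obtain ⟨b', hpb', hb'b⟩ := exists_covBy_le_of_lt hpb
  by_cases hab' : a' = b'
  · subst hab'
    exact ih a' hpa'.lt ha'a hb'b
  obtain ⟨j₀, h₀⟩ := hcov p a' b' hpa' hpb' hab'
  obtain ⟨j₁, h₁⟩ := ih a' hpa'.lt ha'a (h₀.1 (by simp))
  obtain ⟨j, h⟩ := ih b' hpb'.lt ((h₀.1 (by simp)).trans (h₁.1 (by simp))) hb'b
  exact ⟨j, isLUB_pair_of_isLUB_of_le ha'a hb'b h₀ h₁ h⟩

theorem exists_isGLB_of_exists_isLUB_pair [PartialOrder P] [WellFoundedGT P]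
    (hjoin : ∀ a b : P, ∃ j, IsLUB {a, b} j) {s : Set P} (hs : (lowerBounds s).Nonempty) :
    ∃ m, IsGLB s m := by
  obtain ⟨m, hm⟩ := WellFoundedGT.exists_maximal ‹_› _ hs
  refine ⟨m, hm.prop, fun x hx => ?_⟩
  obtain ⟨j, hj⟩ := hjoin x m
  have hxj : x ≤ j ∧ m ≤ j := (isLUB_pair_iff.1 hj j).1 le_rfl
  have hj_lower : j ∈ lowerBounds s := fun y hy => hj.2 <| by
    rintro z (rfl | rfl)
    exacts [hx hy, hm.prop hy]
  exact hxj.1.trans (hm.2 hj_lower hxj.2)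

end

/-- **Lemma 2.1 of [BEZ90].** A bounded poset of finite length in which any two distinct
elements covering a common element have a join is a lattice. -/
theorem lattice_of_covers_have_joins {P : Type*} [PartialOrder P] [BoundedOrder P]
    (hfin : ∃ N : ℕ, ∀ l : List P, l.Chain' (· < ·) → l.length ≤ N)
    (hcov : ∀ p a b : P, p ⋖ a → p ⋖ b → a ≠ b → ∃ j, IsLUB {a, b} j) :
    ∀ a b : P, (∃ j, IsLUB {a, b} j) ∧ (∃ m, IsGLB {a, b} m) := by
  obtain ⟨N, hN⟩ := hfin
  have := wellFoundedLT_of_chain_length_le hN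
  have := wellFoundedGT_of_chain_length_le hN
  have hjoin (a b : P) : ∃ j, IsLUB {a, b} j := exists_isLUB_pair_of_le hcov bot_le bot_le
  exact fun a b => ⟨hjoin a b, exists_isGLB_of_exists_isLUB_pair hjoin ⟨⊥, fun _ _ => bot_le⟩⟩
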